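/- arXiv:1603.01238 — 3 statements merged into one kernel-verified Lean document; each statement's English description precedes it below -/
import Mathlib

section
/- Let n ≥ 1 and let T ⊆ S ⊆ {1,…,n} with S nonempty. In ℝⁿ, the Minkowski sum of the convex hull of the set of standard basis vectors {e_i : i ∈ S} and the convex cone generated by {e_i : i ∈ S \ T} equals the set of all points x ∈ ℝⁿ such that x_i ≥ 0 for all i, x_i = 0 for all i ∉ S, ∑_{i∈S} x_i ≥ 1, and ∑_{i∈T} x_i ≤ 1. -/
open Pointwise

/-- The convex cone generated by a set `Ω ⊆ ℝⁿ`: all finite nonnegative real linear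
combinations of elements of `Ω` (in particular it contains `0`). -/
def coneGen {n : ℕ} (Ω : Set (Fin n → ℝ)) : Set (Fin n → ℝ) :=
  { x | ∃ (k : ℕ) (c : Fin k → ℝ) (v : Fin k → (Fin n → ℝ)),
      (∀ j, 0 ≤ c j) ∧ (∀ j, v j ∈ Ω) ∧ x = ∑ j, c j • v j }

lemma sum_single_apply {n : ℕ} (A : Finset (Fin n)) (c : Fin n → ℝ) (j : Fin n) :
    (∑ i ∈ A, c i • (Pi.single i (1:ℝ) : Fin n → ℝ)) j = if j ∈ A then c j else 0 := by
  rw [Finset.sum_apply]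
  simp [Pi.single_apply, eq_comm]

lemma mem_coneGen_of_sum {n : ℕ} (A : Finset (Fin n)) (c : Fin n → ℝ)
    (hc : ∀ i, 0 ≤ c i) :
    (∑ i ∈ A, c i • (Pi.single i (1:ℝ) : Fin n → ℝ)) ∈
      coneGen ((fun i => Pi.single i (1 : ℝ)) '' (A : Set (Fin n))) := by
  rcases A.eq_empty_or_nonempty with rfl | ⟨i₀, hi₀⟩
  · exact ⟨0, Fin.elim0, Fin.elim0, fun j => j.elim0, fun j => j.elim0, by simp⟩
  · refine ⟨n, fun j => if j ∈ A then c j else 0,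
      fun j => if j ∈ A then Pi.single j 1 else Pi.single i₀ 1, ?_, ?_, ?_⟩
    · intro j; simp only []; split
      · exact hc j
      · exact le_refl 0
    · intro j; simp only []; split
      · exact ⟨j, by assumption, rfl⟩
      · exact ⟨i₀, hi₀, rfl⟩
    · have : ∀ j : Fin n, (if j ∈ A then c j else 0) •
          (if j ∈ A then (Pi.single j (1:ℝ) : Fin n → ℝ) else Pi.single i₀ 1)
          = if j ∈ A then c j • (Pi.single j (1:ℝ) : Fin n → ℝ) else 0 := by
        intro j; split <;> simp
      rw [Finset.sum_congr rfl fun j _ => this j]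
      rw [Finset.sum_ite_mem, Finset.univ_inter]

/-- The Minkowski sum of the convex hull of `{e_i : i ∈ S}` and the convex cone generated by
`{e_i : i ∈ S \ T}` equals the set of `x` with `x_i ≥ 0`, `x_i = 0` for `i ∉ S`,
`∑_{i∈S} x_i ≥ 1` and `∑_{i∈T} x_i ≤ 1`. -/
theorem minkowski_sum_hull_cone (n : ℕ) (hn : 1 ≤ n) (S T : Finset (Fin n))
    (hTS : T ⊆ S) (hS : S.Nonempty) :
    convexHull ℝ ((fun i => Pi.single i (1 : ℝ)) '' (S : Set (Fin n)))
      + coneGen ((fun i => Pi.single i (1 : ℝ)) '' ((S \ T : Finset (Fin n)) : Set (Fin n)))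
    = { x : Fin n → ℝ |
        (∀ i, 0 ≤ x i) ∧ (∀ i, i ∉ S → x i = 0) ∧
        1 ≤ ∑ i ∈ S, x i ∧ ∑ i ∈ T, x i ≤ 1 } := by
  ext x
  rw [Set.mem_add]
  constructor
  · rintro ⟨y, hy, z, hz, rfl⟩
    -- properties of y
    have hyC : y ∈ {y : Fin n → ℝ |
        (∀ i, 0 ≤ y i) ∧ (∀ i, i ∉ S → y i = 0) ∧ ∑ i ∈ S, y i = 1} := by
      refine convexHull_min ?_ ?_ hy
      · rintro _ ⟨j, hj, rfl⟩
        have hjS : j ∈ S := hj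
        refine ⟨fun i => ?_, fun i hi => ?_, ?_⟩
        · simp only [Pi.single_apply]; split <;> norm_num
        · simp only [Pi.single_apply]; rw [if_neg]; rintro rfl; exact hi hjS
        · simp [Pi.single_apply, Finset.sum_ite_eq' S, hjS]
      · rintro y₁ ⟨h1a, h1b, h1c⟩ y₂ ⟨h2a, h2b, h2c⟩ a b ha hb hab
        refine ⟨fun i => ?_, fun i hi => ?_, ?_⟩
        · exact add_nonneg (mul_nonneg ha (h1a i)) (mul_nonneg hb (h2a i))
        · simp [Pi.add_apply, h1b i hi, h2b i hi]
        · simp only [Pi.add_apply, Pi.smul_apply, smul_eq_mul]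
          rw [Finset.sum_add_distrib, ← Finset.mul_sum, ← Finset.mul_sum, h1c, h2c]
          linarith
    obtain ⟨hy0, hyS, hysum⟩ := hyC
    -- properties of z
    obtain ⟨k, c, v, hc, hv, rfl⟩ := hz
    have hσ : ∀ j, ∃ i, i ∈ S \ T ∧ v j = Pi.single i 1 := by
      intro j; obtain ⟨i, hi, hvi⟩ := hv j
      exact ⟨i, hi, hvi.symm⟩
    choose σ hσ1 hσ2 using hσ
    have hz0 : ∀ i, 0 ≤ (∑ j, c j • v j) i := by
      intro i
      rw [Finset.sum_apply]
      refine Finset.sum_nonneg fun j _ => ?_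
      rw [Pi.smul_apply, hσ2 j, smul_eq_mul, Pi.single_apply]
      split <;> simp [hc j]
    have hzS : ∀ i, i ∉ S \ T → (∑ j, c j • v j) i = 0 := by
      intro i hi
      rw [Finset.sum_apply]
      refine Finset.sum_eq_zero fun j _ => ?_
      rw [Pi.smul_apply, hσ2 j, smul_eq_mul, Pi.single_apply, if_neg, mul_zero]
      rintro rfl; exact hi (hσ1 j)
    refine ⟨fun i => add_nonneg (hy0 i) (hz0 i), fun i hi => ?_, ?_, ?_⟩
    · rw [Pi.add_apply, hyS i hi, hzS i (fun h => hi (Finset.mem_sdiff.mp h).1), add_zero]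
    · simp only [Pi.add_apply]
      rw [Finset.sum_add_distrib, hysum]
      have : 0 ≤ ∑ i ∈ S, (∑ j, c j • v j) i := Finset.sum_nonneg fun i _ => hz0 i
      linarith
    · simp only [Pi.add_apply]
      rw [Finset.sum_add_distrib]
      have h1 : ∑ i ∈ T, y i ≤ 1 := by
        rw [← hysum]
        exact Finset.sum_le_sum_of_subset_of_nonneg hTS fun i _ _ => hy0 i
      have h2 : ∑ i ∈ T, (∑ j, c j • v j) i = 0 := by
        refine Finset.sum_eq_zero fun i hi => hzS i ?_
        simp [Finset.mem_sdiff, hi]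
      linarith
  · rintro ⟨h0, hS0, h1, h2⟩
    set s := ∑ i ∈ S, x i with hs
    set t := ∑ i ∈ T, x i with ht
    have hsplit : ∑ i ∈ S \ T, x i + ∑ i ∈ T, x i = ∑ i ∈ S, x i :=
      Finset.sum_sdiff hTS
    have hstnn : 0 ≤ s - t := by
      have : 0 ≤ ∑ i ∈ S \ T, x i := Finset.sum_nonneg fun i _ => h0 i
      linarith
    set lam : ℝ := if s = t then 0 else (1 - t) / (s - t) with hlam
    have hlam0 : 0 ≤ lam := by
      rw [hlam]; split
      · exact le_refl 0
      · apply div_nonneg (by linarith) hstnn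
    have hlam1 : lam ≤ 1 := by
      rw [hlam]; split
      · norm_num
      · rename_i hst
        have hpos : 0 < s - t := lt_of_le_of_ne hstnn (fun h => hst (by linarith))
        rw [div_le_one hpos]
        linarith
    set w : Fin n → ℝ := fun i => if i ∈ T then x i else lam * x i with hw
    have hw0 : ∀ i, 0 ≤ w i := by
      intro i; rw [hw]; simp only []; split
      · exact h0 i
      · exact mul_nonneg hlam0 (h0 i)
    have hwle : ∀ i, w i ≤ x i := by
      intro i; rw [hw]; simp only []; split
      · exact le_refl _
      · nlinarith [h0 i]
    have hwsum : ∑ i ∈ S, w i = 1 := by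
      have e1 : ∑ i ∈ S, w i = ∑ i ∈ S \ T, w i + ∑ i ∈ T, w i :=
        (Finset.sum_sdiff hTS).symm
      have e2 : ∑ i ∈ T, w i = t := by
        rw [ht]; refine Finset.sum_congr rfl fun i hi => ?_
        rw [hw]; simp [hi]
      have e3 : ∑ i ∈ S \ T, w i = lam * (s - t) := by
        have : ∑ i ∈ S \ T, w i = lam * ∑ i ∈ S \ T, x i := by
          rw [Finset.mul_sum]
          refine Finset.sum_congr rfl fun i hi => ?_
          rw [hw]; simp [(Finset.mem_sdiff.mp hi).2]
        rw [this]
        congr 1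
        linarith
      rw [e1, e2, e3]
      rw [hlam]; split
      · rename_i hst
        have : t = 1 := le_antisymm h2 (by rw [← hst] at h2 ⊢; linarith)
        simp [this]
      · rw [div_mul_cancel₀]
        · ring
        · rename_i hst
          rcases lt_or_eq_of_le hstnn with h | h
          · linarith
          · exfalso; exact hst (by linarith)
    refine ⟨∑ i ∈ S, w i • (Pi.single i (1:ℝ) : Fin n → ℝ), ?_,
      ∑ i ∈ S \ T, (x i - w i) • (Pi.single i (1:ℝ) : Fin n → ℝ), ?_, ?_⟩
    · have := Finset.centerMass_mem_convexHull (t := S)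
        (w := w) (z := fun i => (Pi.single i (1:ℝ) : Fin n → ℝ))
        (hw₀ := fun i _ => hw0 i) (hws := by rw [hwsum]; norm_num)
        (hz := fun i hi => Set.mem_image_of_mem _ (Finset.mem_coe.mpr hi))
      rwa [Finset.centerMass_eq_of_sum_1 _ _ hwsum] at this
    · exact mem_coneGen_of_sum (S \ T) (fun i => x i - w i)
        (fun i => sub_nonneg.mpr (hwle i))
    · funext j
      rw [Pi.add_apply, sum_single_apply, sum_single_apply]
      by_cases hjS : j ∈ S
      · by_cases hjT : j ∈ T
        · rw [if_pos hjS, if_neg (by simp [Finset.mem_sdiff, hjT])]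
          rw [hw]; simp [hjT]
        · rw [if_pos hjS, if_pos (Finset.mem_sdiff.mpr ⟨hjS, hjT⟩)]
          ring
      · rw [if_neg hjS, if_neg (fun h => hjS (Finset.mem_sdiff.mp h).1),
          hS0 j hjS]
        norm_num
end

section
/- Let k be a field, let n ≥ 3 and 1 ≤ m ≤ n − 1. Suppose given elements a_j, b_j, e_j ∈ k for 2 ≤ j ≤ n, an element π ∈ k, and elements c_{j,k} ∈ k for all ordered pairs of distinct indices j, k ∈ {2,…,n}, satisfying for all pairwise distinct j, k, j' ∈ {2,…,n}: (R1) a_j·c_{k,j} = −a_k·c_{j,k}; (R2) (b_k − b_j)·c_{j,k} = a_j·(e_j + e_k); (R3) (e_k − e_j)·c_{j,k} = a_j·(π + b_j² + b_j·b_k + b_k²); (R4) c_{j,k}·c_{j',k} − c_{j',j}·c_{j,k} − c_{j,j'}·c_{j',k} = a_j·a_{j'}·(b_k + b_j + b_{j'}). Assume moreover that a_n = 0, that c_{n,i} = 0 for all i with 2 ≤ i ≤ m, and that c_{n,j} ≠ 0 for all j with m < j < n. Then for every j with m < j ≤ n and every i with 2 ≤ i ≤ m one has: a_j = 0, b_j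 = b_n, e_j = e_n, c_{j,i} = 0, and c_{i,j} = c_{i,n}. -/
/-- Algebraic core of Proposition 2.7: a point of the chart `Ũ_{1,n}(1)` with `a_n = 0`,
`c_{n,i} = 0` for `2 ≤ i ≤ m` and `c_{n,j} ≠ 0` for `m < j < n` satisfies the defining
equations of the boundary divisor `D_{I,J}` with `I = [1,m]`, `J = [m+1,n]`. -/
theorem boundary_divisor_equations {k : Type*} [Field k] (n m : ℕ)
    (hn : 3 ≤ n) (hm1 : 1 ≤ m) (hm2 : m ≤ n - 1)
    (a b e : ℕ → k) (π : k) (c : ℕ → ℕ → k)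
    (R1 : ∀ j l, 2 ≤ j → j ≤ n → 2 ≤ l → l ≤ n → j ≠ l →
      a j * c l j = -(a l * c j l))
    (R2 : ∀ j l, 2 ≤ j → j ≤ n → 2 ≤ l → l ≤ n → j ≠ l →
      (b l - b j) * c j l = a j * (e j + e l))
    (R3 : ∀ j l, 2 ≤ j → j ≤ n → 2 ≤ l → l ≤ n → j ≠ l →
      (e l - e j) * c j l = a j * (π + b j ^ 2 + b j * b l + b l ^ 2))
    (R4 : ∀ j j' l, 2 ≤ j → j ≤ n → 2 ≤ j' → j' ≤ n → 2 ≤ l → l ≤ n →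
      j ≠ j' → j ≠ l → j' ≠ l →
      c j l * c j' l - c j' j * c j l - c j j' * c j' l
        = a j * a j' * (b l + b j + b j'))
    (han : a n = 0)
    (hc0 : ∀ i, 2 ≤ i → i ≤ m → c n i = 0)
    (hcne : ∀ j, m < j → j < n → c n j ≠ 0) :
    ∀ j, m < j → j ≤ n → ∀ i, 2 ≤ i → i ≤ m →
      a j = 0 ∧ b j = b n ∧ e j = e n ∧ c j i = 0 ∧ c i j = c i n := by
  intro j hmj hjn i hi2 him
  have hm2' : 2 ≤ m := le_trans hi2 him
  have hj2 : 2 ≤ j := le_trans hm2' (le_of_lt hmj)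
  have hin : i ≤ n := le_trans him (le_trans (le_of_lt hmj) hjn)
  have hji : j ≠ i := by omega
  have hcni : c n i = 0 := hc0 i hi2 him
  rcases eq_or_lt_of_le hjn with rfl | hjlt
  · exact ⟨han, rfl, rfl, hcni, rfl⟩
  · have hne : c n j ≠ 0 := hcne j hmj hjlt
    have hnj : n ≠ j := by omega
    have h1 := R1 n j (by omega) le_rfl hj2 (le_of_lt hjlt) hnj
    rw [han, zero_mul] at h1
    have haj : a j = 0 := by
      have h1' : a j * c n j = 0 := neg_eq_zero.mp h1.symm
      rcases mul_eq_zero.mp h1' with h | h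
      · exact h
      · exact absurd h hne
    have h2 := R2 n j (by omega) le_rfl hj2 (le_of_lt hjlt) hnj
    rw [han, zero_mul] at h2
    have hbj : b j = b n := by
      rcases mul_eq_zero.mp h2 with h | h
      · exact sub_eq_zero.mp h
      · exact absurd h hne
    have h3 := R3 n j (by omega) le_rfl hj2 (le_of_lt hjlt) hnj
    rw [han, zero_mul] at h3
    have hej : e j = e n := by
      rcases mul_eq_zero.mp h3 with h | h
      · exact sub_eq_zero.mp h
      · exact absurd h hne
    have h4 := R4 j n i hj2 hjn (by omega) le_rfl hi2 hin hnj.symm hji (by omega)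
    rw [han, hcni, haj] at h4
    have hcji : c j i = 0 := by
      have h4' : c n j * c j i = 0 := by linear_combination -h4
      rcases mul_eq_zero.mp h4' with h | h
      · exact absurd h hne
      · exact h
    have h5 := R4 i n j hi2 hin (by omega) le_rfl hj2 hjn (by omega) hji.symm hnj
    rw [han, hcni] at h5
    have hcij : c i j = c i n := by
      have h5' : (c i j - c i n) * c n j = 0 := by linear_combination h5
      rcases mul_eq_zero.mp h5' with h | h
      · exact sub_eq_zero.mp h
      · exact absurd h hne
    exact ⟨haj, hbj, hej, hcji, hcij⟩
end

section
/- Let R be a commutative ring and let a, b, b', c, e, e', π, s ∈ R satisfy: (1) s = e² − b·(π + b²); (2) (b' − b)·c = a·(e + e'); (3) (e' − e)·c = a·(π + b² + b·b' + b'²). Then a⁶·s = (c³ − a³·e' − 3a²·b·c − 2a³·e)² − (c² − a²·(b + b'))³ − a⁴·π·(c² − a²·(b + b')). -/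
/-- The identity verifying the global relation `S_i = E_{ij}² − B_{ij}(Π_i + B_{ij}²)` on the
chart `Ũ_{1,n}(k)` (Proposition 2.13(ii) of the paper). -/
theorem S_Pi_identity {R : Type*} [CommRing R] (a b b' c e e' π s : R)
    (h1 : s = e ^ 2 - b * (π + b ^ 2))
    (h2 : (b' - b) * c = a * (e + e'))
    (h3 : (e' - e) * c = a * (π + b ^ 2 + b * b' + b' ^ 2)) :
    a ^ 6 * s = (c ^ 3 - a ^ 3 * e' - 3 * a ^ 2 * b * c - 2 * a ^ 3 * e) ^ 2
      - (c ^ 2 - a ^ 2 * (b + b')) ^ 3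
      - a ^ 4 * π * (c ^ 2 - a ^ 2 * (b + b')) := by
  linear_combination a ^ 6 * h1
    - (3 * a ^ 2 * c ^ 3 - 2 * a ^ 4 * b' * c - 7 * a ^ 4 * b * c - a ^ 5 * e' - 3 * a ^ 5 * e) * h2
    - (a ^ 3 * c ^ 2 - a ^ 5 * b' - 2 * a ^ 5 * b) * h3
end
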